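/- Let a, b, c be positive integers with a ≤ b, c odd, and a² + b² < c². Then 2·S(a,b,c) < 8π(2(a + b + c) − 4 + π/√3). -/
import Mathlib


open Real

/-- Complete elliptic integral of the first kind. -/
noncomputable def completeEllipticK (k : ℝ) : ℝ :=
  ∫ θ in (0:ℝ)..(π/2), 1 / Real.sqrt (1 - k^2 * Real.sin θ ^ 2)

/-- Complete elliptic integral of the second kind. -/
noncomputable def completeEllipticE (k : ℝ) : ℝ :=
  ∫ θ in (0:ℝ)..(π/2), Real.sqrt (1 - k^2 * Real.sin θ ^ 2)

/-- The area `S(a,b,c)` of the generalized Lawson surface `T_{a,b,c}`. -/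
noncomputable def lawsonArea (a b c : ℝ) : ℝ :=
  4 * π / Real.sqrt (c^2 - a^2) *
    (2 * (c^2 - a^2) * completeEllipticE (Real.sqrt ((b^2 - a^2) / (c^2 - a^2)))
      - (c^2 - a^2 - b^2) * completeEllipticK (Real.sqrt ((b^2 - a^2) / (c^2 - a^2))))

lemma aux_ellipticE_le (k : ℝ) : completeEllipticE k ≤ π / 2 := by
  have h : completeEllipticE k ≤ ∫ _θ in (0:ℝ)..(π/2), (1:ℝ) := by
    apply intervalIntegral.integral_mono_on (by positivity)
    · apply Continuous.intervalIntegrable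
      exact Real.continuous_sqrt.comp (by continuity)
    · exact intervalIntegrable_const
    · intro x _hx
      have h1 : 1 - k^2 * Real.sin x ^ 2 ≤ 1 := by nlinarith [sq_nonneg (k * Real.sin x)]
      calc Real.sqrt (1 - k^2 * Real.sin x ^ 2) ≤ Real.sqrt 1 := Real.sqrt_le_sqrt h1
        _ = 1 := Real.sqrt_one
  simpa using h

lemma aux_ellipticK_ge (k : ℝ) (hk : k ^ 2 < 1) : π / 2 ≤ completeEllipticK k := by
  have hpos : ∀ x : ℝ, 0 < 1 - k^2 * Real.sin x ^ 2 := by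
    intro x
    nlinarith [Real.sin_sq_le_one x, sq_nonneg k, sq_nonneg (Real.sin x)]
  have hcont : Continuous fun θ : ℝ => 1 / Real.sqrt (1 - k^2 * Real.sin θ ^ 2) := by
    apply Continuous.div continuous_const
    · exact Real.continuous_sqrt.comp (by continuity)
    · intro x
      exact ne_of_gt (Real.sqrt_pos.mpr (hpos x))
  have h : (∫ _θ in (0:ℝ)..(π/2), (1:ℝ)) ≤ completeEllipticK k := by
    apply intervalIntegral.integral_mono_on (by positivity)
    · exact intervalIntegrable_const
    · exact hcont.intervalIntegrable _ _
    · intro x _hx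
      have h1 : 1 - k^2 * Real.sin x ^ 2 ≤ 1 := by nlinarith [sq_nonneg (k * Real.sin x)]
      have h2 : Real.sqrt (1 - k^2 * Real.sin x ^ 2) ≤ 1 := by
        calc Real.sqrt (1 - k^2 * Real.sin x ^ 2) ≤ Real.sqrt 1 := Real.sqrt_le_sqrt h1
          _ = 1 := Real.sqrt_one
      have h3 : 0 < Real.sqrt (1 - k^2 * Real.sin x ^ 2) := Real.sqrt_pos.mpr (hpos x)
      rw [le_div_iff₀ h3]
      linarith
  simpa using h


lemma aux_sqrt3_lt : Real.sqrt 3 < 1.74 := by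
  nlinarith [Real.sq_sqrt (by norm_num : (0:ℝ) ≤ 3), Real.sqrt_nonneg (3:ℝ)]

lemma aux_pidiv : (1.8:ℝ) < π / Real.sqrt 3 := by
  rw [lt_div_iff₀ (Real.sqrt_pos.mpr (by norm_num))]
  nlinarith [Real.pi_gt_d6, aux_sqrt3_lt, Real.sqrt_nonneg (3:ℝ)]

lemma aux_key (x y z : ℝ) (hx : 1 ≤ x) (hy : 1 ≤ y) (hz : 3 ≤ z) :
    π/2 * (z + y) ≤ 2 * (x + y + z) - 4 + π / Real.sqrt 3 := by
  have hpi315 : π < 3.15 := Real.pi_lt_d2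
  have hprod : (0:ℝ) ≤ (4 - π) * (y + z - 4) :=
    mul_nonneg (by linarith) (by linarith)
  nlinarith [hprod, aux_pidiv, hpi315]

/-- For positive integers `a ≤ b`, `c` odd, `a² + b² < c²`,
one has `2S(a,b,c) < 8π(2(a+b+c)−4+π/√3)`. -/
theorem lawsonArea_lt_of_c_odd (a b c : ℕ) (ha : 0 < a) (hb : 0 < b) (hc : 0 < c)
    (hab : a ≤ b) (hcodd : Odd c) (hlt : a^2 + b^2 < c^2) :
    2 * lawsonArea a b c < 8 * π * (2 * ((a:ℝ) + b + c) - 4 + π / Real.sqrt 3) := by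
  -- basic integer facts
  have hc3 : 3 ≤ c := by
    obtain ⟨m, hm⟩ := hcodd
    subst hm
    rcases Nat.eq_zero_or_pos m with h0 | h1
    · subst h0; simp at hlt; nlinarith
    · omega
  have ha1 : (1:ℝ) ≤ a := by exact_mod_cast ha
  have hb1 : (1:ℝ) ≤ b := by exact_mod_cast hb
  have hc3' : (3:ℝ) ≤ c := by exact_mod_cast hc3
  have habR : (a:ℝ) ≤ b := by exact_mod_cast hab
  have hltR : (a:ℝ)^2 + (b:ℝ)^2 < (c:ℝ)^2 := by exact_mod_cast hlt
  set A : ℝ := (c:ℝ)^2 - (a:ℝ)^2 with hAdef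
  have hA : 0 < A := by simp only [hAdef]; nlinarith
  have hAb : (b:ℝ)^2 < A := by simp only [hAdef]; nlinarith
  have hAb' : 0 < A - (b:ℝ)^2 := by linarith
  set k : ℝ := Real.sqrt (((b:ℝ)^2 - (a:ℝ)^2) / A) with hkdef
  have hknum : (0:ℝ) ≤ (b:ℝ)^2 - (a:ℝ)^2 := by nlinarith
  have hk2 : k^2 = ((b:ℝ)^2 - (a:ℝ)^2) / A := Real.sq_sqrt (by positivity)
  have hk1 : k^2 < 1 := by
    rw [hk2, div_lt_one hA]
    nlinarith
  have hE := aux_ellipticE_le k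
  have hK := aux_ellipticK_ge k hk1
  have hpi := Real.pi_pos
  have hsA : Real.sqrt A < c := by
    have h1 : Real.sqrt A < Real.sqrt ((c:ℝ)^2) := by
      apply Real.sqrt_lt_sqrt hA.le
      simp only [hAdef]; nlinarith
    rwa [Real.sqrt_sq (by positivity)] at h1
  have hbsA : (b:ℝ) < Real.sqrt A := by
    rw [← Real.sqrt_sq (by positivity : (0:ℝ) ≤ (b:ℝ))]
    exact Real.sqrt_lt_sqrt (by positivity) hAb
  have hsApos : 0 < Real.sqrt A := lt_of_le_of_lt (by positivity) hbsA
  set E : ℝ := completeEllipticE k with hEdef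
  set K : ℝ := completeEllipticK k with hKdef
  set X : ℝ := 2 * A * E - (A - (b:ℝ)^2) * K with hXdef
  have hX : X ≤ π/2 * (A + (b:ℝ)^2) := by
    have q1 : 2 * A * E ≤ 2 * A * (π/2) :=
      mul_le_mul_of_nonneg_left hE (by positivity)
    have q2 : (A - (b:ℝ)^2) * (π/2) ≤ (A - (b:ℝ)^2) * K :=
      mul_le_mul_of_nonneg_left hK hAb'.le
    have q3 : 2 * A * (π/2) - (A - (b:ℝ)^2) * (π/2) = π/2 * (A + (b:ℝ)^2) := by ring
    rw [hXdef]
    linarith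
  have hX2 : X < π/2 * (Real.sqrt A * ((c:ℝ) + (b:ℝ))) := by
    have hsq : Real.sqrt A * Real.sqrt A = A := Real.mul_self_sqrt hA.le
    have p1 : Real.sqrt A * Real.sqrt A < Real.sqrt A * c :=
      mul_lt_mul_of_pos_left hsA hsApos
    have p2 : (b:ℝ) * (b:ℝ) < Real.sqrt A * b :=
      mul_lt_mul_of_pos_right hbsA (by linarith)
    have p3 : (b:ℝ)^2 = (b:ℝ) * (b:ℝ) := by ring
    have p4 : Real.sqrt A * ((c:ℝ) + (b:ℝ)) = Real.sqrt A * c + Real.sqrt A * b := by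
      ring
    have h1 : A + (b:ℝ)^2 < Real.sqrt A * ((c:ℝ) + (b:ℝ)) := by linarith
    calc X ≤ π/2 * (A + (b:ℝ)^2) := hX
      _ < π/2 * (Real.sqrt A * ((c:ℝ) + (b:ℝ))) :=
          mul_lt_mul_of_pos_left h1 (by positivity)
  have hkey : π/2 * ((c:ℝ) + (b:ℝ)) ≤ 2 * ((a:ℝ) + b + c) - 4 + π / Real.sqrt 3 :=
    aux_key _ _ _ ha1 hb1 hc3'
  have hXdiv : X / Real.sqrt A < 2 * ((a:ℝ) + b + c) - 4 + π / Real.sqrt 3 := by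
    rw [div_lt_iff₀ hsApos]
    calc X < π/2 * (Real.sqrt A * ((c:ℝ) + (b:ℝ))) := hX2
      _ = (π/2 * ((c:ℝ) + (b:ℝ))) * Real.sqrt A := by ring
      _ ≤ (2 * ((a:ℝ) + b + c) - 4 + π / Real.sqrt 3) * Real.sqrt A :=
          mul_le_mul_of_nonneg_right hkey hsApos.le
  have heq : 2 * lawsonArea a b c = 8 * π * (X / Real.sqrt A) := by
    rw [hXdef, hEdef, hKdef, hkdef, hAdef, lawsonArea]
    ring
  rw [heq]
  exact mul_lt_mul_of_pos_left hXdiv (by positivity)
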